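/- arXiv:2302.13452 — 6 statements merged into one kernel-verified Lean document; each statement's English description precedes it below -/
import Mathlib

section
/- If W is a real symmetric n×n matrix with W ⪯ b·I for some b > 0, and Q_b := U θ_b(Λ) Uᵀ where W = U Λ Uᵀ is an orthogonal eigendecomposition and θ_b is applied entrywise to the diagonal of Λ, then W = Q_b - (1/(4b)) Q_b². -/
/-! Conjugation by `U` with `Uᵀ U = 1` is multiplicative, so the identity reduces to the diagonal
matrix `Λ`, i.e. to the scalar identity `θ_b(z) - θ_b(z)² / (4b) = z`, valid since every
eigenvalue `Λ i i` is at most `b` (a diagonal entry of the positive semidefinite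
`Uᵀ (bI - W) U = bI - Λ`). -/

open Matrix

/-- θ_b(z) = 2b(1 + sqrt(1 - z/b)). -/
noncomputable def theta (b z : ℝ) : ℝ := 2 * b * (1 + Real.sqrt (1 - z / b))

lemma theta_sub_sq_div (b z : ℝ) (hb : 0 < b) (hz : z ≤ b) :
    theta b z - 1 / (4 * b) * (theta b z * theta b z) = z := by
  have hs : Real.sqrt (1 - z / b) * Real.sqrt (1 - z / b) = 1 - z / b :=
    Real.mul_self_sqrt (sub_nonneg.mpr ((div_le_one hb).mpr hz))
  unfold theta
  generalize Real.sqrt (1 - z / b) = s at hs ⊢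
  have hsq : 1 / (4 * b) * (2 * b * (1 + s) * (2 * b * (1 + s))) = b * (1 + s) ^ 2 := by
    field_simp
    ring
  field_simp at hs
  rw [hsq]
  linear_combination (-1 : ℝ) * hs

section Conjugation

variable {ι R : Type*} [Fintype ι] [DecidableEq ι] [CommSemiring R] {U : Matrix ι ι R}

lemma conj_mul_conj (hU : Uᵀ * U = 1) (A B : Matrix ι ι R) :
    U * A * Uᵀ * (U * B * Uᵀ) = U * (A * B) * Uᵀ := by
  simp only [Matrix.mul_assoc, ← Matrix.mul_assoc Uᵀ U, hU, Matrix.one_mul]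

lemma transpose_mul_conj_mul (hU : Uᵀ * U = 1) (A : Matrix ι ι R) :
    Uᵀ * (U * A * Uᵀ) * U = A := by
  simp only [Matrix.mul_assoc, hU, Matrix.mul_one, ← Matrix.mul_assoc Uᵀ U, Matrix.one_mul]

end Conjugation

lemma diag_le_of_posSemidef_smul_one_sub {ι : Type*} [DecidableEq ι] {A : Matrix ι ι ℝ} {b : ℝ}
    (h : (b • 1 - A).PosSemidef) (i : ι) : A i i ≤ b := by
  have hi := h.diag_nonneg (i := i)
  simp only [Matrix.sub_apply, Matrix.smul_apply, one_apply_eq, smul_eq_mul, mul_one] at hi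
  exact sub_nonneg.mp hi

lemma diag_le_of_posSemidef_smul_one_sub_conj {ι : Type*} [Fintype ι] [DecidableEq ι]
    {U Λ : Matrix ι ι ℝ} {b : ℝ} (hU : Uᵀ * U = 1)
    (h : (b • 1 - U * Λ * Uᵀ).PosSemidef) (i : ι) : Λ i i ≤ b := by
  have hconj := h.conjTranspose_mul_mul_same U
  rw [conjTranspose_eq_transpose_of_trivial, Matrix.mul_sub, Matrix.sub_mul,
    transpose_mul_conj_mul hU, Matrix.mul_smul, Matrix.smul_mul, Matrix.mul_one, hU] at hconj
  exact diag_le_of_posSemidef_smul_one_sub hconj i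

theorem splitting_upper_bounded_symmetric_general {n : ℕ}
    (W U Λ : Matrix (Fin n) (Fin n) ℝ) (b : ℝ) (hb : 0 < b)
    (hPSD : (b • (1 : Matrix (Fin n) (Fin n) ℝ) - W).PosSemidef)
    (hU2 : Uᵀ * U = 1)
    (hΛ : Λ.IsDiag) (hdecomp : W = U * Λ * Uᵀ)
    (Q : Matrix (Fin n) (Fin n) ℝ)
    (hQ : Q = U * Matrix.diagonal (fun i => theta b (Λ i i)) * Uᵀ) :
    W = Q - (1 / (4 * b)) • (Q * Q) := by
  set D := Matrix.diagonal (fun i => theta b (Λ i i))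
  have heig : ∀ i, Λ i i ≤ b :=
    diag_le_of_posSemidef_smul_one_sub_conj hU2 (hdecomp ▸ hPSD)
  have hΛD : Λ = D - (1 / (4 * b)) • (D * D) := by
    rw [← hΛ.diagonal_diag, diagonal_mul_diagonal, ← diagonal_smul, diagonal_sub]
    congr 1
    funext i
    exact (theta_sub_sq_div b (Λ i i) hb (heig i)).symm
  rw [hdecomp, hQ, conj_mul_conj hU2, hΛD, Matrix.mul_sub, Matrix.sub_mul, Matrix.mul_smul,
    Matrix.smul_mul]

theorem splitting_upper_bounded_symmetric {n : ℕ}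
    (W U Λ : Matrix (Fin n) (Fin n) ℝ) (b : ℝ) (hb : 0 < b)
    (hW : W.IsSymm)
    (hPSD : (b • (1 : Matrix (Fin n) (Fin n) ℝ) - W).PosSemidef)
    (hU1 : U * Uᵀ = 1) (hU2 : Uᵀ * U = 1)
    (hΛ : Λ.IsDiag) (hdecomp : W = U * Λ * Uᵀ)
    (Q : Matrix (Fin n) (Fin n) ℝ)
    (hQ : Q = U * Matrix.diagonal (fun i => theta b (Λ i i)) * Uᵀ) :
    W = Q - (1 / (4 * b)) • (Q * Q) :=
  splitting_upper_bounded_symmetric_general W U Λ b hb hPSD hU2 hΛ hdecomp Q hQ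
end

section
/- If S and Q are real symmetric n×n matrices with Q positive definite, then the Q^{1/2}-weighted Euclidean logarithmic norm of A := SQ equals its spectral abscissa; that is, λ_max((Q A Q^{-1} + Aᵀ)/2) = α(A). -/
/-! Conjugating `A = S Q` by `Q` gives `Q S = Aᵀ` when `S` and `Q` are symmetric, so the
symmetrised matrix `(Q A Q⁻¹ + Aᵀ) / 2` is just `Aᵀ`, whose spectrum is that of `A`. -/

open Matrix

/-- Maximum real part of the (complex) eigenvalues. -/
noncomputable def lambdaMax {n : ℕ} (A : Matrix (Fin n) (Fin n) ℝ) : ℝ :=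
  sSup (Complex.re '' spectrum ℂ (A.map (algebraMap ℝ ℂ)))

/-- Spectral abscissa: maximum real part of the (complex) eigenvalues. -/
noncomputable def specAbscissa {n : ℕ} (A : Matrix (Fin n) (Fin n) ℝ) : ℝ :=
  sSup (Complex.re '' spectrum ℂ (A.map (algebraMap ℝ ℂ)))

namespace Matrix

variable {n R : Type*} [Fintype n] [DecidableEq n] [CommRing R]

theorem spectrum_transpose (A : Matrix n n R) : spectrum R Aᵀ = spectrum R A := by
  ext r
  rw [spectrum.mem_iff, spectrum.mem_iff, ← isUnit_transpose, transpose_sub,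
    algebraMap_eq_diagonal, diagonal_transpose, transpose_transpose]

theorem IsSymm.mul_mul_nonsing_inv_eq_transpose {S Q : Matrix n n R} (hS : S.IsSymm)
    (hQ : Q.IsSymm) (hQdet : IsUnit Q.det) : Q * (S * Q) * Q⁻¹ = (S * Q)ᵀ := by
  rw [← Matrix.mul_assoc, mul_nonsing_inv_cancel_right _ _ hQdet, transpose_mul, hS.eq, hQ.eq]

end Matrix

theorem weighted_lognorm_eq_specAbscissa {n : ℕ} (S Q : Matrix (Fin n) (Fin n) ℝ)
    (hS : S.IsSymm) (hQ : Q.IsSymm) (hQpos : Q.PosDef) :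
    lambdaMax ((1/2 : ℝ) • (Q * (S * Q) * Q⁻¹ + (S * Q)ᵀ)) = specAbscissa (S * Q) := by
  have hQdet : IsUnit Q.det := hQpos.det_pos.ne'.isUnit
  have hsymmetrised : (1/2 : ℝ) • (Q * (S * Q) * Q⁻¹ + (S * Q)ᵀ) = (S * Q)ᵀ := by
    rw [hS.mul_mul_nonsing_inv_eq_transpose hQ hQdet, ← two_smul ℝ, smul_smul]
    norm_num
  rw [hsymmetrised, lambdaMax, specAbscissa, transpose_map, spectrum_transpose]
end

section
/- If W is a real symmetric negative definite n×n matrix, then for every d ∈ [0,1]^n the matrix diag(d)·W has only real, nonpositive eigenvalues, and its (−W)^{1/2}-weighted Euclidean log-norm is nonpositive: λ_max((−W)(diag(d)W)(−W)^{-1} + (diag(d)W)ᵀ) ≤ 0. -/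
/-!
Write `Q = -W = Bᴴ B` and `D = diag(d) ⪰ 0`. The products `D Q = (D Bᴴ) B` and `Q D = Bᴴ (B D)`
have the same nonzero spectrum as `B D Bᴴ ⪰ 0`, so all their eigenvalues are real and
nonnegative. Now `D W = -D Q`, and, `W` and `D` being symmetric,
`Q (D W) Q⁻¹ + (D W)ᵀ = -Q D - Q D = -2 Q D`.
-/

open Matrix

open scoped ComplexOrder

namespace Matrix

section RCLike

variable {𝕜 n : Type*} [RCLike 𝕜] [Fintype n] [DecidableEq n]

theorem spectrum_mul_subset_nonneg_of_posSemidef_mul_comm {A B : Matrix n n 𝕜}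
    (hBA : (B * A).PosSemidef) : spectrum 𝕜 (A * B) ⊆ {z | 0 ≤ z} := by
  intro z hz
  rcases eq_or_ne z 0 with rfl | hz0
  · exact le_rfl
  have hz' : z ∈ spectrum 𝕜 (B * A) \ {0} := spectrum.nonzero_mul_comm (𝕜 := 𝕜) A B ▸ ⟨hz, hz0⟩
  exact (posSemidef_iff_isHermitian_and_spectrum_nonneg.mp hBA).2 hz'.1

theorem PosSemidef.spectrum_mul_conjTranspose_mul_self_subset_nonneg {A : Matrix n n 𝕜}
    (hA : A.PosSemidef) (B : Matrix n n 𝕜) : spectrum 𝕜 (A * (Bᴴ * B)) ⊆ {z | 0 ≤ z} := by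
  rw [← Matrix.mul_assoc]
  apply spectrum_mul_subset_nonneg_of_posSemidef_mul_comm
  simpa only [Matrix.mul_assoc] using hA.mul_mul_conjTranspose_same B

theorem PosSemidef.spectrum_conjTranspose_mul_self_mul_subset_nonneg {A : Matrix n n 𝕜}
    (hA : A.PosSemidef) (B : Matrix n n 𝕜) : spectrum 𝕜 (Bᴴ * B * A) ⊆ {z | 0 ≤ z} := by
  rw [Matrix.mul_assoc]
  exact spectrum_mul_subset_nonneg_of_posSemidef_mul_comm (hA.mul_mul_conjTranspose_same B)

theorem PosSemidef.exists_eq_conjTranspose_mul_self {A : Matrix n n 𝕜} (hA : A.PosSemidef) :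
    ∃ B : Matrix n n 𝕜, A = Bᴴ * B := by
  open scoped MatrixOrder in
  exact CStarAlgebra.nonneg_iff_eq_star_mul_self.mp hA.nonneg

end RCLike

theorem IsSymm.neg_mul_mul_mul_inv_add_transpose {R n : Type*} [CommRing R] [Fintype n]
    [DecidableEq n] {W D : Matrix n n R} (hW : W.IsSymm) (hD : D.IsSymm)
    (hdet : IsUnit (-W).det) :
    (-W) * (D * W) * (-W)⁻¹ + (D * W)ᵀ = (-2 : R) • ((-W) * D) := by
  have hconj : (-W) * (D * W) * (-W)⁻¹ = -((-W) * D * ((-W) * (-W)⁻¹)) := by noncomm_ring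
  rw [hconj, mul_nonsing_inv _ hdet, Matrix.mul_one, transpose_mul, hW.eq, hD.eq, neg_mul]
  module

end Matrix

theorem spectrum_smul_subset_nonpos {A : Type*} [Ring A] [Algebra ℂ A] {a : A}
    (ha : spectrum ℂ a ⊆ {z | 0 ≤ z}) {c : ℂ} (hc : c < 0) :
    spectrum ℂ (c • a) ⊆ {z | z ≤ 0} := by
  rw [show c • a = Units.mk0 c hc.ne • a from rfl, spectrum.unit_smul_eq_smul]
  rintro _ ⟨w, hw, rfl⟩
  exact mul_nonpos_of_nonpos_of_nonneg hc.le (ha hw)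

theorem negdef_case {n : ℕ} (W : Matrix (Fin n) (Fin n) ℝ)
    (hW : W.IsSymm) (hneg : (-W).PosDef)
    (d : Fin n → ℝ) (hd : ∀ i, d i ∈ Set.Icc (0:ℝ) 1) :
    (∀ z ∈ spectrum ℂ ((Matrix.diagonal d * W).map (algebraMap ℝ ℂ)),
        z.im = 0 ∧ z.re ≤ 0) ∧
    lambdaMax ((-W) * (Matrix.diagonal d * W) * (-W)⁻¹ + (Matrix.diagonal d * W)ᵀ) ≤ 0 := by
  set f := algebraMap ℝ ℂ
  obtain ⟨B, hB⟩ := hneg.posSemidef.exists_eq_conjTranspose_mul_self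
  have hQ : (-W).map f = (B.map f)ᴴ * B.map f := by
    rw [hB, Matrix.map_mul, conjTranspose_map _ fun _ => by simp [f]]
  have hD : ((diagonal d).map f).PosSemidef := by
    rw [diagonal_map (map_zero f), posSemidef_diagonal_iff]
    exact fun i => by simpa [f, Complex.zero_le_real] using (hd i).1
  have hDQ : spectrum ℂ ((diagonal d).map f * (-W).map f) ⊆ {z | 0 ≤ z} :=
    hQ ▸ hD.spectrum_mul_conjTranspose_mul_self_subset_nonneg _
  have hQD : spectrum ℂ ((-W).map f * (diagonal d).map f) ⊆ {z | 0 ≤ z} :=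
    hQ ▸ hD.spectrum_conjTranspose_mul_self_mul_subset_nonneg _
  refine ⟨fun z hz => ?_, ?_⟩
  · rw [show diagonal d * W = -(diagonal d * (-W)) by noncomm_ring, Matrix.map_neg _ (map_neg f),
      Matrix.map_mul, ← neg_one_smul ℂ] at hz
    obtain ⟨hre, him⟩ := Complex.le_def.mp (spectrum_smul_subset_nonpos hDQ (by norm_num) hz)
    exact ⟨him, hre⟩
  · rw [lambdaMax, hW.neg_mul_mul_mul_inv_add_transpose (isSymm_diagonal d)
      ((isUnit_iff_isUnit_det _).mp hneg.isUnit), map_smul' _ _ _ (map_mul f), Matrix.map_mul]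
    refine Real.sSup_le ?_ le_rfl
    rintro _ ⟨z, hz, rfl⟩
    exact (Complex.le_def.mp (spectrum_smul_subset_nonpos hQD (by norm_num [f]) hz)).1
end

section
/- Let W be symmetric, negative semidefinite (α(W) = 0), and ε > 0; let Q_ε := U θ_ε(Λ) Uᵀ. Then for every d ∈ [0,1]^n, Q_ε² diag(d) W + W diag(d) Q_ε² ⪯ 2ε Q_ε². -/
open Matrix

/-!
Since `θ_ε(z)² = 4ε(θ_ε(z) - z)` for `z ≤ ε`, the matrix `Q = Q_ε` satisfies `Q² = 4ε(Q - W)`.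
Substituting this for `Q²` in the cross terms gives the sum-of-squares identity
`2εQ² - (Q²DW + WDQ²) = 2ε(Q - 2DW)ᵀ(Q - 2DW) + 8ε W(D - D²)W`,
and `D - D² ⪰ 0` because the entries of `D = diag(d)` lie in `[0, 1]`.
-/

theorem theta_mul_self {b z : ℝ} (hb : 0 < b) (hz : z ≤ b) :
    theta b z * theta b z = 4 * b * (theta b z - z) := by
  have hs : b * Real.sqrt (1 - z / b) ^ 2 = b - z := by
    rw [Real.sq_sqrt (by rw [sub_nonneg, div_le_one hb]; exact hz)]
    field_simp
  unfold theta
  linear_combination (4 * b) * hs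

namespace Matrix

variable {ι : Type*} [Fintype ι]

theorem posSemidef_smul_mul_self_sub_of_mul_self_eq {Q W D : Matrix ι ι ℝ} {c : ℝ} (hc : 0 ≤ c)
    (hQ : Qᵀ = Q) (hW : Wᵀ = W) (hD : Dᵀ = D) (hDD : (D - D * D).PosSemidef)
    (hQQ : Q * Q = (4 * c) • (Q - W)) :
    ((2 * c) • (Q * Q) - (Q * Q * D * W + W * D * (Q * Q))).PosSemidef := by
  have hcross : Q * Q * D * W + W * D * (Q * Q) =
      (4 * c) • (Q * (D * W) + W * (D * Q)) - (8 * c) • (W * (D * W)) := by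
    rw [hQQ]
    simp only [Matrix.sub_mul, Matrix.mul_sub, Matrix.smul_mul, Matrix.mul_smul, Matrix.mul_assoc]
    module
  have hsos : (2 * c) • (Q * Q) - (Q * Q * D * W + W * D * (Q * Q)) =
      (2 * c) • ((Q - (2 : ℝ) • (D * W))ᴴ * (Q - (2 : ℝ) • (D * W)))
        + (8 * c) • (Wᴴ * (D - D * D) * W) := by
    simp only [conjTranspose_eq_transpose_of_trivial, transpose_sub, transpose_smul,
      transpose_mul, hQ, hW, hD, hcross]
    simp only [Matrix.sub_mul, Matrix.mul_sub, Matrix.smul_mul, Matrix.mul_smul, Matrix.mul_assoc]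
    module
  rw [hsos]
  exact ((posSemidef_conjTranspose_mul_self _).smul (by positivity)).add
    ((hDD.conjTranspose_mul_mul_same W).smul (by positivity))

variable [DecidableEq ι]

theorem conj_mul_conj {α : Type*} [Semiring α] {U A B : Matrix ι ι α} (hU : Uᵀ * U = 1) :
    U * A * Uᵀ * (U * B * Uᵀ) = U * (A * B) * Uᵀ := by
  calc U * A * Uᵀ * (U * B * Uᵀ) = U * A * (Uᵀ * U) * B * Uᵀ := by simp only [Matrix.mul_assoc]
    _ = U * (A * B) * Uᵀ := by rw [hU, Matrix.mul_one, Matrix.mul_assoc U]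

theorem diag_nonpos_of_eq_conj {W U Λ : Matrix ι ι ℝ} (hU : Uᵀ * U = 1)
    (hW : (-W).PosSemidef) (hWΛ : W = U * Λ * Uᵀ) (i : ι) : Λ i i ≤ 0 := by
  have hΛ : Uᵀ * W * U = Λ := by
    calc Uᵀ * W * U = (Uᵀ * U) * Λ * (Uᵀ * U) := by simp only [hWΛ, Matrix.mul_assoc]
      _ = Λ := by rw [hU, Matrix.one_mul, Matrix.mul_one]
  have := (hW.conjTranspose_mul_mul_same U).diag_nonneg (i := i)
  rw [conjTranspose_eq_transpose_of_trivial, Matrix.mul_neg, Matrix.neg_mul, hΛ] at this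
  simpa using this

theorem theta_conj_mul_self {U Λ : Matrix ι ι ℝ} {b : ℝ} (hb : 0 < b) (hU : Uᵀ * U = 1)
    (hΛ : Λ.IsDiag) (hΛb : ∀ i, Λ i i ≤ b) :
    U * diagonal (fun i => theta b (Λ i i)) * Uᵀ * (U * diagonal (fun i => theta b (Λ i i)) * Uᵀ)
      = (4 * b) • (U * diagonal (fun i => theta b (Λ i i)) * Uᵀ - U * Λ * Uᵀ) := by
  have hdiag : diagonal (fun i => theta b (Λ i i)) * diagonal (fun i => theta b (Λ i i)) =
      (4 * b) • (diagonal (fun i => theta b (Λ i i)) - diagonal Λ.diag) := by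
    rw [diagonal_mul_diagonal, diagonal_sub, ← diagonal_smul]
    exact congrArg diagonal (funext fun i => theta_mul_self hb (hΛb i))
  rw [hΛ.diagonal_diag] at hdiag
  rw [conj_mul_conj hU, hdiag, Matrix.mul_smul, Matrix.smul_mul, Matrix.mul_sub, Matrix.sub_mul]

end Matrix

theorem lognorm_bound_semidef_case_general {n : ℕ}
    (W U Λ : Matrix (Fin n) (Fin n) ℝ) (ε : ℝ) (hε : 0 < ε)
    (hW : W.IsSymm) (hnsd : (-W).PosSemidef)
    (hU2 : Uᵀ * U = 1)
    (hΛ : Λ.IsDiag) (hdecomp : W = U * Λ * Uᵀ)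
    (Q : Matrix (Fin n) (Fin n) ℝ)
    (hQ : Q = U * Matrix.diagonal (fun i => theta ε (Λ i i)) * Uᵀ)
    (d : Fin n → ℝ) (hd : ∀ i, d i ∈ Set.Icc (0:ℝ) 1) :
    ((2 * ε) • (Q * Q) -
      (Q * Q * Matrix.diagonal d * W + W * Matrix.diagonal d * (Q * Q))).PosSemidef := by
  have hΛε : ∀ i, Λ i i ≤ ε := fun i => (diag_nonpos_of_eq_conj hU2 hnsd hdecomp i).trans hε.le
  have hQQ : Q * Q = (4 * ε) • (Q - W) := by
    rw [hQ, hdecomp]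
    exact theta_conj_mul_self hε hU2 hΛ hΛε
  have hQsymm : Qᵀ = Q := by
    rw [hQ]
    simp only [transpose_mul, transpose_transpose, diagonal_transpose, Matrix.mul_assoc]
  have hDD : (diagonal d - diagonal d * diagonal d).PosSemidef := by
    rw [diagonal_mul_diagonal, diagonal_sub]
    exact posSemidef_diagonal_iff.mpr fun i => by nlinarith [(hd i).1, (hd i).2]
  exact posSemidef_smul_mul_self_sub_of_mul_self_eq hε.le hQsymm hW (diagonal_transpose d) hDD hQQ

theorem lognorm_bound_semidef_case {n : ℕ}
    (W U Λ : Matrix (Fin n) (Fin n) ℝ) (ε : ℝ) (hε : 0 < ε)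
    (hW : W.IsSymm) (hnsd : (-W).PosSemidef)
    (hU1 : U * Uᵀ = 1) (hU2 : Uᵀ * U = 1)
    (hΛ : Λ.IsDiag) (hdecomp : W = U * Λ * Uᵀ)
    (Q : Matrix (Fin n) (Fin n) ℝ)
    (hQ : Q = U * Matrix.diagonal (fun i => theta ε (Λ i i)) * Uᵀ)
    (d : Fin n → ℝ) (hd : ∀ i, d i ∈ Set.Icc (0:ℝ) 1) :
    ((2 * ε) • (Q * Q) -
      (Q * Q * Matrix.diagonal d * W + W * Matrix.diagonal d * (Q * Q))).PosSemidef :=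
  lognorm_bound_semidef_case_general W U Λ ε hε hW hnsd hU2 hΛ hdecomp Q hQ d hd
end

section
/- If W is symmetric negative definite, then for every d ∈ [0,1]^n the Euclidean weighted log-norm μ_{2,(−W)^{1/2}}(−I + diag(d)W) ≤ −1; in LMI form: (−W)(−I + diag(d)W)(−W)^{-1} + (−I + diag(d)W)ᵀ ⪯ −2I. -/
/-!
Since `W` and `diag(d)` are symmetric, `(-W) (-1 + diag(d) W) = (-1 + W diag(d)) (-W)`, so the
conjugated term equals the transposed one and the matrix is twice `-1 + W diag(d)`. Writing the
positive semidefinite `diag(d)` as `Sᴴ S`, the nonzero eigenvalues of `(-W) Sᴴ S` are those of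
the positive semidefinite `S (-W) Sᴴ`; hence every eigenvalue of `W diag(d)` is real and
nonpositive, and every eigenvalue of `2 (-1 + W diag(d))` is real and at most `-2`.
-/

open Matrix

open scoped ComplexOrder

lemma spectrum.div_two_add_one_mem_of_mem_double {𝕜 A : Type*} [Field 𝕜] [NeZero (2 : 𝕜)]
    [Ring A] [Algebra 𝕜 A] {a : A} {z : 𝕜} (hz : z ∈ spectrum 𝕜 ((-1 + a) + (-1 + a))) :
    z / 2 + 1 ∈ spectrum 𝕜 a := by
  have h2 : (2 : 𝕜) ≠ 0 := two_ne_zero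
  have hhalf := spectrum.smul_mem_smul_iff (r := Units.mk0 (2 : 𝕜) h2) (s := z / 2) (a := -1 + a)
  simp only [Units.smul_mk0, smul_eq_mul, mul_div_cancel₀ _ h2] at hhalf
  rw [← two_smul 𝕜, hhalf, ← map_one (algebraMap 𝕜 A), ← map_neg,
    ← spectrum.singleton_add_eq] at hz
  obtain ⟨_, rfl, μ, hμ, hμz⟩ := hz
  convert hμ using 1
  linear_combination -hμz

namespace Matrix

variable {n 𝕜 : Type*} [Fintype n] [DecidableEq n] [RCLike 𝕜]

lemma PosSemidef.map_algebraMap {A : Matrix n n ℝ} (hA : A.PosSemidef) :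
    (A.map (algebraMap ℝ 𝕜)).PosSemidef := by
  open scoped MatrixOrder in
  obtain ⟨B, rfl⟩ := CStarAlgebra.nonneg_iff_eq_star_mul_self.mp hA.nonneg
  have hstar : Function.Semiconj (algebraMap ℝ 𝕜) star star := fun x => by simp
  rw [star_eq_conjTranspose, ← RingHom.mapMatrix_apply, map_mul, RingHom.mapMatrix_apply,
    RingHom.mapMatrix_apply, conjTranspose_map _ hstar]
  exact posSemidef_conjTranspose_mul_self _

lemma PosSemidef.nonneg_of_mem_spectrum {A : Matrix n n 𝕜} (hA : A.PosSemidef) {z : 𝕜}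
    (hz : z ∈ spectrum 𝕜 A) : 0 ≤ z :=
  (posSemidef_iff_isHermitian_and_spectrum_nonneg.mp hA).2 hz

lemma PosSemidef.nonneg_of_mem_spectrum_mul {A B : Matrix n n 𝕜} (hA : A.PosSemidef)
    (hB : B.PosSemidef) {z : 𝕜} (hz : z ∈ spectrum 𝕜 (A * B)) : 0 ≤ z := by
  obtain rfl | hz0 := eq_or_ne z 0
  · exact le_rfl
  open scoped MatrixOrder in
  obtain ⟨S, rfl⟩ := CStarAlgebra.nonneg_iff_eq_star_mul_self.mp hB.nonneg
  have hzS : z ∈ spectrum 𝕜 (S * A * Sᴴ) := by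
    have hcomm := spectrum.nonzero_mul_comm (𝕜 := 𝕜) (A * Sᴴ) S
    rw [star_eq_conjTranspose, ← Matrix.mul_assoc] at hz
    rw [Matrix.mul_assoc]
    exact (hcomm ▸ ⟨hz, hz0⟩ : z ∈ spectrum 𝕜 (S * (A * Sᴴ)) \ {0}).1
  exact (hA.mul_mul_conjTranspose_same S).nonneg_of_mem_spectrum hzS

end Matrix

theorem fnn_contraction_negdef {n : ℕ} (W : Matrix (Fin n) (Fin n) ℝ)
    (hW : W.IsSymm) (hneg : (-W).PosDef)
    (d : Fin n → ℝ) (hd : ∀ i, d i ∈ Set.Icc (0:ℝ) 1) :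
    ∀ z ∈ spectrum ℂ
        (((-W) * (-1 + Matrix.diagonal d * W) * (-W)⁻¹ +
          (-1 + Matrix.diagonal d * W)ᵀ).map (algebraMap ℝ ℂ)),
      z.im = 0 ∧ z.re ≤ -2 := by
  intro z hz
  have hintertwine : (-W) * (-1 + diagonal d * W) = (-1 + W * diagonal d) * (-W) := by
    noncomm_ring
  have htranspose : (-1 + diagonal d * W)ᵀ = -1 + W * diagonal d := by
    simp [transpose_mul, hW.eq]
  rw [hintertwine, Matrix.mul_assoc, mul_nonsing_inv _ ((isUnit_iff_isUnit_det _).mp hneg.isUnit),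
    mul_one, htranspose, ← RingHom.mapMatrix_apply, map_add, map_add, map_neg, map_one, map_mul,
    RingHom.mapMatrix_apply, RingHom.mapMatrix_apply] at hz
  have hWD := spectrum.div_two_add_one_mem_of_mem_double hz
  have hnonneg : 0 ≤ -(z / 2 + 1) := by
    refine hneg.posSemidef.map_algebraMap.nonneg_of_mem_spectrum_mul
      (PosSemidef.diagonal fun i => (hd i).1).map_algebraMap ?_
    rwa [Matrix.map_neg _ (map_neg _), Matrix.neg_mul, ← spectrum.neg_eq, Set.neg_mem_neg]
  rw [Complex.le_def] at hnonneg
  simp only [Complex.zero_re, Complex.zero_im, Complex.neg_re, Complex.neg_im, Complex.add_re,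
    Complex.add_im, Complex.div_ofNat_re, Complex.div_ofNat_im, Complex.one_re,
    Complex.one_im] at hnonneg
  constructor <;> linarith
end

section
/- If W is symmetric with α(W) > 0, Q := U θ_{α(W)}(Λ) Uᵀ and P := Q²/(4α(W)), then W = Q − P and for every d with 0 < d ≤ 1 componentwise, the block matrix [[2α(W)P, −Q diag(d) P],[−P diag(d) Q, 2 P diag(d) P]] is positive semidefinite. -/
/-!
In the eigenbasis `U` everything is diagonal: `Q = U diag(θ) Uᵀ` and `P = U diag(θ²/(4a)) Uᵀ`
with `θᵢ = θ_a(Λᵢᵢ)`. Since `a • 1 - W ⪰ 0`, every `Λᵢᵢ ≤ a`, and for `z ≤ a` the identity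
`θ_a(z) - θ_a(z)²/(4a) = z` holds, which gives `W = Q - P`.

Because `2aP = ½ Q²`, the block matrix is the congruence `Lᵀ K L` with `L = diag(Q, P)` and
`K = [[½ I, -D], [-D, 2D]]`, `D = diag(d)`; the Schur complement of `½ I` in `K` is
`2D - 2D² = 2D(1 - D) ⪰ 0`.
-/

open Matrix

lemma theta_sub_mul_self_div {a z : ℝ} (ha : 0 < a) (hz : z ≤ a) :
    theta a z - 1 / (4 * a) * (theta a z * theta a z) = z := by
  have hs : Real.sqrt (1 - z / a) ^ 2 = 1 - z / a :=
    Real.sq_sqrt (sub_nonneg.2 ((div_le_one ha).2 hz))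
  have hza : a * (z / a) = z := mul_div_cancel₀ z ha.ne'
  unfold theta
  generalize Real.sqrt (1 - z / a) = s at hs
  have hsq : 1 / (4 * a) * (2 * a * (1 + s) * (2 * a * (1 + s))) = a * (1 + s) ^ 2 := by
    field_simp
    ring
  rw [hsq]
  linear_combination (-a) * hs + hza

lemma Matrix.PosSemidef.fromBlocks_conjTranspose_mul_mul_same {ι m R : Type*} [Fintype ι]
    [Fintype m] [Ring R] [PartialOrder R] [StarRing R] {A B C D : Matrix ι ι R}
    (h : (fromBlocks A B C D).PosSemidef) (X Y : Matrix ι m R) :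
    (fromBlocks (Xᴴ * A * X) (Xᴴ * B * Y) (Yᴴ * C * X) (Yᴴ * D * Y)).PosSemidef := by
  convert h.conjTranspose_mul_mul_same (fromBlocks X 0 0 Y) using 1
  simp [fromBlocks_conjTranspose, fromBlocks_multiply, Matrix.mul_assoc]

section

variable {ι : Type*} [Fintype ι] [DecidableEq ι]

lemma posSemidef_fromBlocks_half_neg_diagonal {d : ι → ℝ} (hd0 : 0 ≤ d) (hd1 : d ≤ 1) :
    (fromBlocks ((1 / 2 : ℝ) • (1 : Matrix ι ι ℝ)) (-diagonal d) (-diagonal d)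
      ((2 : ℝ) • diagonal d)).PosSemidef := by
  have hleft : (2 : ℝ) • (1 : Matrix ι ι ℝ) * (1 / 2 : ℝ) • 1 = 1 := by
    rw [smul_mul_smul_comm]
    norm_num
  let : Invertible ((1 / 2 : ℝ) • (1 : Matrix ι ι ℝ)) := invertibleOfLeftInverse _ _ hleft
  have hB : (-diagonal d)ᴴ = -diagonal d := by simp
  have hschur := (PosDef.fromBlocks₁₁ (-diagonal d) ((2 : ℝ) • diagonal d)
    (PosDef.one.smul (by norm_num : (0 : ℝ) < 1 / 2))).2
  rw [hB, inv_eq_left_inv hleft] at hschur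
  apply hschur
  have hcompl : (2 : ℝ) • diagonal d - -diagonal d * (2 : ℝ) • 1 * -diagonal d
      = diagonal (fun i => 2 * (d i * (1 - d i))) := by
    ext i j
    rcases eq_or_ne i j with rfl | hij
    · simp
      ring
    · simp [hij]
  rw [hcompl, posSemidef_diagonal_iff]
  exact fun i => mul_nonneg zero_le_two (mul_nonneg (hd0 i) (sub_nonneg.2 (hd1 i)))

lemma posSemidef_fromBlocks_mul_diagonal_mul {Q P : Matrix ι ι ℝ} (hQ : Q.IsSymm)
    (hP : P.IsSymm) {d : ι → ℝ} (hd0 : 0 ≤ d) (hd1 : d ≤ 1) :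
    (fromBlocks ((1 / 2 : ℝ) • (Q * Q)) (-(Q * diagonal d * P)) (-(P * diagonal d * Q))
      ((2 : ℝ) • (P * diagonal d * P))).PosSemidef := by
  convert (posSemidef_fromBlocks_half_neg_diagonal hd0 hd1).fromBlocks_conjTranspose_mul_mul_same
    Q P using 2 <;> simp [hQ.eq, hP.eq, -diagonal_neg]

lemma le_of_posSemidef_smul_one_sub_conj {U Λ : Matrix ι ι ℝ} {a : ℝ} (hU : Uᵀ * U = 1)
    (h : (a • 1 - U * Λ * Uᵀ).PosSemidef) (i : ι) : Λ i i ≤ a := by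
  have hconj : Uᵀ * (a • 1 - U * Λ * Uᵀ) * U = a • 1 - Λ := by
    simp [Matrix.mul_sub, Matrix.sub_mul, Matrix.mul_assoc, ← Matrix.mul_assoc Uᵀ U, hU]
  have hΛ : (a • 1 - Λ).PosSemidef := by
    simpa [hconj] using h.conjTranspose_mul_mul_same U
  simpa using hΛ.diag_nonneg (i := i)

lemma mul_diagonal_mul_transpose_mul {α : Type*} [Semiring α] {U : Matrix ι ι α}
    (hU : Uᵀ * U = 1) (f g : ι → α) :
    U * diagonal f * Uᵀ * (U * diagonal g * Uᵀ) = U * diagonal (f * g) * Uᵀ := by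
  simp only [Matrix.mul_assoc, ← Matrix.mul_assoc Uᵀ, hU, Matrix.one_mul]
  rw [← Matrix.mul_assoc (diagonal f), diagonal_mul_diagonal]
  rfl

lemma isSymm_mul_diagonal_mul_transpose {α : Type*} [CommSemiring α] (U : Matrix ι ι α)
    (f : ι → α) : (U * diagonal f * Uᵀ).IsSymm := by
  simp [IsSymm, Matrix.mul_assoc]

end

theorem splitting_and_schur_psd_general {n : ℕ}
    (W U Λ : Matrix (Fin n) (Fin n) ℝ) (a : ℝ)
    (hU2 : Uᵀ * U = 1)
    (hΛ : Λ.IsDiag) (hdecomp : W = U * Λ * Uᵀ)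
    (ha_ub : (a • (1 : Matrix (Fin n) (Fin n) ℝ) - W).PosSemidef)
    (ha_pos : 0 < a)
    (Q P : Matrix (Fin n) (Fin n) ℝ)
    (hQ : Q = U * Matrix.diagonal (fun i => theta a (Λ i i)) * Uᵀ)
    (hP : P = (1 / (4 * a)) • (Q * Q)) :
    W = Q - P ∧
    ∀ d : Fin n → ℝ, (∀ i, 0 < d i ∧ d i ≤ 1) →
      (Matrix.fromBlocks
        ((2 * a) • P) (-(Q * Matrix.diagonal d * P))
        (-(P * Matrix.diagonal d * Q)) ((2 : ℝ) • (P * Matrix.diagonal d * P))).PosSemidef := by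
  set θ : Fin n → ℝ := fun i => theta a (Λ i i)
  have hθ : θ - (1 / (4 * a)) • (θ * θ) = Λ.diag := funext fun i =>
    theta_sub_mul_self_div ha_pos (le_of_posSemidef_smul_one_sub_conj hU2 (hdecomp ▸ ha_ub) i)
  have hP' : P = U * diagonal ((1 / (4 * a)) • (θ * θ)) * Uᵀ := by
    rw [hP, hQ, mul_diagonal_mul_transpose_mul hU2, diagonal_smul, Matrix.mul_smul,
      Matrix.smul_mul]
  refine ⟨?_, fun d hd => ?_⟩
  · rw [hdecomp, hQ, hP', ← Matrix.sub_mul, ← Matrix.mul_sub, diagonal_sub]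
    congr 2
    rw [← hΛ.diagonal_diag, ← hθ]
    rfl
  · have h2aP : (2 * a) • P = (1 / 2 : ℝ) • (Q * Q) := by
      rw [hP, smul_smul]
      congr 1
      field_simp
      ring
    rw [h2aP]
    exact posSemidef_fromBlocks_mul_diagonal_mul
      (hQ ▸ isSymm_mul_diagonal_mul_transpose U θ) (hP' ▸ isSymm_mul_diagonal_mul_transpose U _)
      (fun i => (hd i).1.le) (fun i => (hd i).2)

theorem splitting_and_schur_psd {n : ℕ}
    (W U Λ : Matrix (Fin n) (Fin n) ℝ) (a : ℝ)
    (hW : W.IsSymm)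
    (hU1 : U * Uᵀ = 1) (hU2 : Uᵀ * U = 1)
    (hΛ : Λ.IsDiag) (hdecomp : W = U * Λ * Uᵀ)
    (ha_ub : (a • (1 : Matrix (Fin n) (Fin n) ℝ) - W).PosSemidef)
    (ha_eig : a ∈ spectrum ℝ W) (ha_pos : 0 < a)
    (Q P : Matrix (Fin n) (Fin n) ℝ)
    (hQ : Q = U * Matrix.diagonal (fun i => theta a (Λ i i)) * Uᵀ)
    (hP : P = (1 / (4 * a)) • (Q * Q)) :
    W = Q - P ∧
    ∀ d : Fin n → ℝ, (∀ i, 0 < d i ∧ d i ≤ 1) →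
      (Matrix.fromBlocks
        ((2 * a) • P) (-(Q * Matrix.diagonal d * P))
        (-(P * Matrix.diagonal d * Q)) ((2 : ℝ) • (P * Matrix.diagonal d * P))).PosSemidef :=
  splitting_and_schur_psd_general W U Λ a hU2 hΛ hdecomp ha_ub ha_pos Q P hQ hP
end
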